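/- Let n ≥ 1 and 1 ≤ m ≤ n, let s ≥ m, and let μ_{2n,m} be the unique U(n)-invariant Borel probability measure on G_h(2n,m). If A ⊆ ℝ^{2n} is a Borel set with H^s(A) < ∞, then for Lebesgue-almost every x ∈ ℝ^{2n} one has H^{s−m}(A ∩ (V^⊥ + x)) < ∞ for μ_{2n,m}-almost every V ∈ G_h(2n,m). -/

import Mathlib

/-!
Cover `A` by compact sets `uᵢ` of diameter at most `1/(k+1)` with `∑ diam (uᵢ) ^ s ≤ H^s(A) + 1`.
The slice `A ∩ (V^⊥ + x)` is covered by the `uᵢ` that meet `V^⊥ + x`, so its `H^{s-m}` measure is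
at most the `liminf` over `k` of `∑ diam (uᵢ) ^ (s - m)` over those `i`. For fixed `V`, the points
`x` of a ball of radius `R` whose plane `V^⊥ + x` meets `uᵢ` lie in a box with `m` sides of length
`2 diam uᵢ`, so by Fatou the integral of this bound over the ball is `≲ R^(2n-m) (H^s(A) + 1)`
(Eilenberg's inequality). Integrating also over the closed set of rank-`m` orthogonal projections,
Tonelli gives finiteness for almost every `x` and then almost every plane.
-/

open MeasureTheory Module Metric Set
open scoped ENNReal NNReal Real

noncomputable section

/-- Euclidean space `ℝ^{2n}`. -/
abbrev E (n : ℕ) : Type := EuclideanSpace ℝ (Fin (2 * n))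

/-- The standard symplectic form `ω((x,y),(u,v)) = x·v − y·u` on `ℝ^{2n}`. -/
def symp (n : ℕ) (x y : E n) : ℝ :=
  ∑ i : Fin n, (x ⟨i.1, by have := i.2; omega⟩ * y ⟨i.1 + n, by have := i.2; omega⟩ -
    x ⟨i.1 + n, by have := i.2; omega⟩ * y ⟨i.1, by have := i.2; omega⟩)

/-- A linear subspace of `ℝ^{2n}` is isotropic if the symplectic form vanishes on it. -/
def IsIsotropic (n : ℕ) (V : Submodule ℝ (E n)) : Prop :=
  ∀ v ∈ V, ∀ w ∈ V, symp n v w = 0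

/-- The orthogonal projection onto a subspace, as a continuous linear endomorphism. -/
def projCLM (n : ℕ) (V : Submodule ℝ (E n)) : E n →L[ℝ] E n :=
  V.subtypeL.comp (Submodule.orthogonalProjectionOnto V)

/-- The isotropic Grassmannian `G_h(2n,m)`, realized as the set of orthogonal projection
operators onto `m`-dimensional isotropic subspaces, inside the continuous linear
endomorphisms of `ℝ^{2n}`.  For `P` in this set, the corresponding plane `V` is
`LinearMap.range P` and the orthogonal projection `P_V` is `P` itself. -/
def grass (n m : ℕ) : Set (E n →L[ℝ] E n) :=
  {P | ∃ V : Submodule ℝ (E n), IsIsotropic n V ∧ finrank ℝ V = m ∧ P = projCLM n V}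

/-- Membership in `U(n)`: a linear isometry of `ℝ^{2n}` preserving the symplectic form. -/
def IsUnitary (n : ℕ) (g : E n ≃ₗᵢ[ℝ] E n) : Prop :=
  ∀ x y, symp n (g x) (g y) = symp n x y

/-- The action of an isometry on projection operators: `P ↦ g ∘ P ∘ g⁻¹`. -/
def conjAct (n : ℕ) (g : E n ≃ₗᵢ[ℝ] E n) (P : E n →L[ℝ] E n) : E n →L[ℝ] E n :=
  (g.toLinearIsometry.toContinuousLinearMap.comp P).comp
    g.symm.toLinearIsometry.toContinuousLinearMap

/-- `ν` is a `U(n)`-invariant Borel probability measure `μ_{2n,m}` on `G_h(2n,m)`: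
a Borel measure on the space of operators giving full mass to the isotropic
Grassmannian and invariant under the conjugation action of the unitary group.
(Probability is imposed via an `IsProbabilityMeasure` instance.) -/
def IsGrassMeasure (n m : ℕ) (ν : Measure (E n →L[ℝ] E n)) : Prop :=
  ν (grass n m) = 1 ∧
    ∀ g : E n ≃ₗᵢ[ℝ] E n, IsUnitary n g → Measure.map (conjAct n g) ν = ν

open Filter Topology

section StarProjections

variable {F : Type*} [NormedAddCommGroup F] [InnerProductSpace ℝ F] [FiniteDimensional ℝ F]

-- The rank is encoded by the trace so that this set is closed in `F →L[ℝ] F`.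
def starProjectionsOfRank (F : Type*) [NormedAddCommGroup F] [InnerProductSpace ℝ F]
    [FiniteDimensional ℝ F] (m : ℕ) : Set (F →L[ℝ] F) :=
  {P | IsStarProjection P ∧ LinearMap.trace ℝ F (P : F →ₗ[ℝ] F) = m}

theorem IsStarProjection.trace_eq_finrank_range {P : F →L[ℝ] F} (hP : IsStarProjection P) :
    LinearMap.trace ℝ F (P : F →ₗ[ℝ] F) = finrank ℝ (LinearMap.range (P : F →ₗ[ℝ] F)) :=
  (LinearMap.IsIdempotentElem.isProj_range _
    (ContinuousLinearMap.IsIdempotentElem.toLinearMap hP.isIdempotentElem)).trace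

theorem isClosed_starProjectionsOfRank (m : ℕ) : IsClosed (starProjectionsOfRank F m) := by
  have htrace : Continuous fun P : F →L[ℝ] F => LinearMap.trace ℝ F (P : F →ₗ[ℝ] F) :=
    LinearMap.continuous_of_finiteDimensional
      ((LinearMap.trace ℝ F).comp (ContinuousLinearMap.coeLM ℝ))
  have hclosed := ((isClosed_eq (continuous_id.mul continuous_id) continuous_id).inter
    (isClosed_eq continuous_star continuous_id)).inter
      (isClosed_eq htrace (continuous_const (y := (m : ℝ))))
  convert hclosed using 1
  ext P
  simp only [starProjectionsOfRank, isStarProjection_iff, IsIdempotentElem, IsSelfAdjoint,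
    mem_ofPred_eq, mem_inter_iff, Pi.mul_apply, id_eq]

theorem finrank_range_of_mem_starProjectionsOfRank {m : ℕ} {P : F →L[ℝ] F}
    (hP : P ∈ starProjectionsOfRank F m) :
    finrank ℝ (LinearMap.range (P : F →ₗ[ℝ] F)) = m := by
  exact_mod_cast hP.1.trace_eq_finrank_range.symm.trans hP.2

theorem IsStarProjection.apply_eq_zero_iff {P : F →L[ℝ] F} (hP : IsStarProjection P) (z : F) :
    P z = 0 ↔ z ∈ (LinearMap.range (P : F →ₗ[ℝ] F))ᗮ := by
  obtain ⟨_, hPV⟩ := isStarProjection_iff_eq_starProjection_range.mp hP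
  conv_lhs => rw [hPV]
  exact Submodule.starProjection_apply_eq_zero_iff _

theorem grass_subset_starProjectionsOfRank (n m : ℕ) :
    grass n m ⊆ starProjectionsOfRank (E n) m := by
  rintro P ⟨V, -, hV, rfl⟩
  change V.starProjection ∈ _
  refine ⟨isStarProjection_starProjection, ?_⟩
  rw [isStarProjection_starProjection.trace_eq_finrank_range, Submodule.range_starProjection, hV]

end StarProjections

section Slab

variable {F : Type*} [NormedAddCommGroup F] [InnerProductSpace ℝ F] [FiniteDimensional ℝ F]
  [MeasurableSpace F] [BorelSpace F]

/-- In an orthonormal basis adapted to `F = V ⊕ Vᗮ`, the set lies in a box with `finrank V` sides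
of length `2 ediam S` and the other sides of length `2R`. -/
theorem volume_closedBall_inter_add_orthogonal_le (V : Submodule ℝ F) {S : Set F}
    (hS : ediam S ≠ ∞) (R : ℝ) :
    volume (closedBall (0 : F) R ∩ {x | ∃ y ∈ S, y - x ∈ Vᗮ}) ≤
      (2 * ediam S) ^ finrank ℝ V * ENNReal.ofReal (2 * R) ^ finrank ℝ Vᗮ := by
  rcases S.eq_empty_or_nonempty with rfl | ⟨y₀, hy₀⟩
  · simp
  set d := (ediam S).toReal
  let b : OrthonormalBasis (Fin (finrank ℝ V) ⊕ Fin (finrank ℝ Vᗮ)) ℝ F :=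
    ((stdOrthonormalBasis ℝ V).prod (stdOrthonormalBasis ℝ Vᗮ)).map
      V.orthogonalDecomposition.symm
  have hb_inl (i) : b (.inl i) ∈ V := by simp [b]
  have hcoord (i) (z : F) : |inner ℝ (b i) z| ≤ ‖z‖ := by
    simpa [b.orthonormal.1 i] using abs_real_inner_le_norm (b i) z
  let g : F → (Fin (finrank ℝ V) ⊕ Fin (finrank ℝ Vᗮ) → ℝ) :=
    fun x => (MeasurableEquiv.toLp 2 _).symm (b.repr x)
  have hg : MeasurePreserving g volume volume :=
    (EuclideanSpace.volume_preserving_symm_measurableEquiv_toLp _).comp b.measurePreserving_repr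
  let c : Fin (finrank ℝ V) ⊕ Fin (finrank ℝ Vᗮ) → ℝ :=
    Sum.elim (fun i => inner ℝ (b (.inl i)) y₀) 0
  let w : Fin (finrank ℝ V) ⊕ Fin (finrank ℝ Vᗮ) → ℝ := Sum.elim (fun _ => d) (fun _ => R)
  have hsub : closedBall (0 : F) R ∩ {x | ∃ y ∈ S, y - x ∈ Vᗮ} ⊆
      g ⁻¹' univ.pi fun i => Icc (c i - w i) (c i + w i) := by
    rintro x ⟨hxR, y, hy, hyx⟩ i -
    rw [mem_closedBall_zero_iff] at hxR
    simp only [g, MeasurableEquiv.toLp_symm_apply, b.repr_apply_apply,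
      ← mem_Icc_iff_abs_le]
    rcases i with i | j
    · have hxy : inner ℝ (b (.inl i)) y = inner ℝ (b (.inl i)) x := by
        rw [← sub_eq_zero, ← inner_sub_right]
        exact Submodule.inner_right_of_mem_orthogonal (hb_inl i) hyx
      have hyy₀ : ‖y₀ - y‖ ≤ d := by
        rw [← dist_eq_norm, dist_edist]
        exact ENNReal.toReal_mono hS (edist_le_ediam_of_mem hy₀ hy)
      simpa [c, w, ← hxy, ← inner_sub_right] using (hcoord _ _).trans hyy₀
    · simpa [c, w] using (hcoord _ x).trans hxR
  calc volume (closedBall (0 : F) R ∩ {x | ∃ y ∈ S, y - x ∈ Vᗮ})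
      ≤ volume (univ.pi fun i => Icc (c i - w i) (c i + w i)) :=
        (measure_mono hsub).trans_eq (hg.measure_preimage
          (MeasurableSet.univ_pi fun _ => measurableSet_Icc).nullMeasurableSet)
    _ = ∏ i, ENNReal.ofReal (2 * w i) := by
        rw [volume_pi_pi]
        refine Finset.prod_congr rfl fun i _ => ?_
        rw [Real.volume_Icc]
        ring_nf
    _ = (2 * ediam S) ^ finrank ℝ V * ENNReal.ofReal (2 * R) ^ finrank ℝ Vᗮ := by
        rw [Fintype.prod_sum_type]
        simp [w, d, ENNReal.ofReal_mul, ENNReal.ofReal_toReal hS]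

end Slab

section Incidence

variable {F : Type*} [NormedAddCommGroup F] [InnerProductSpace ℝ F]

def incidenceSet (S : Set F) : Set (F × (F →L[ℝ] F)) :=
  {p | ∃ y ∈ S, p.2 (y - p.1) = 0}

theorem IsCompact.isClosed_incidenceSet {S : Set F} (hS : IsCompact S) :
    IsClosed (incidenceSet S) := by
  have : CompactSpace S := isCompact_iff_compactSpace.mp hS
  have hcont : Continuous fun q : (F × (F →L[ℝ] F)) × S => q.1.2 (q.2 - q.1.1) :=
    isBoundedBilinearMap_apply.continuous.comp₂ (continuous_snd.comp continuous_fst)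
      ((continuous_subtype_val.comp continuous_snd).sub (continuous_fst.comp continuous_fst))
  convert isClosedMap_fst_of_compactSpace _
    (isClosed_eq hcont (continuous_const (y := (0 : F)))) using 1
  ext p
  simp [incidenceSet]

def sliceSum (t : ℝ) (u : ℕ → Set F) (p : F × (F →L[ℝ] F)) : ℝ≥0∞ :=
  ∑' i, (incidenceSet (u i)).indicator (fun _ => ediam (u i) ^ t) p

theorem measurable_sliceSum [FiniteDimensional ℝ F] [MeasurableSpace F] [BorelSpace F] (t : ℝ)
    {u : ℕ → Set F} (hu : ∀ i, IsCompact (u i)) : Measurable (sliceSum t u) :=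
  .tsum fun i => measurable_const.indicator (hu i).isClosed_incidenceSet.measurableSet

end Incidence

section Eilenberg

variable {F : Type*} [NormedAddCommGroup F] [InnerProductSpace ℝ F] [FiniteDimensional ℝ F]
  [MeasurableSpace F] [BorelSpace F]

theorem setLIntegral_closedBall_indicator_incidenceSet_le (V : Submodule ℝ F) {S : Set F}
    (hS : ediam S ≠ ∞) {s : ℝ} (hs : (finrank ℝ V : ℝ) ≤ s) (R : ℝ) :
    ∫⁻ x in closedBall 0 R,
        (incidenceSet S).indicator (fun _ => ediam S ^ (s - finrank ℝ V)) (x, V.starProjection) ≤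
      2 ^ finrank ℝ V * ENNReal.ofReal (2 * R) ^ finrank ℝ Vᗮ * ⨆ _ : S.Nonempty, ediam S ^ s := by
  rcases S.eq_empty_or_nonempty with rfl | hne
  · simp [incidenceSet]
  have hslice : (fun x => (incidenceSet S).indicator (fun _ => ediam S ^ (s - finrank ℝ V))
        (x, V.starProjection)) =
      {x | ∃ y ∈ S, y - x ∈ Vᗮ}.indicator fun _ => ediam S ^ (s - finrank ℝ V) := by
    have hpre : (fun x => (x, V.starProjection)) ⁻¹' incidenceSet S =
        {x | ∃ y ∈ S, y - x ∈ Vᗮ} :=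
      ext fun x => exists_congr fun y => and_congr_right' V.starProjection_apply_eq_zero_iff
    rw [← hpre]
    rfl
  rw [hslice, iSup_pos hne]
  calc _ ≤ ediam S ^ (s - finrank ℝ V) *
          volume (closedBall (0 : F) R ∩ {x | ∃ y ∈ S, y - x ∈ Vᗮ}) := by
        grw [lintegral_indicator_const_le, Measure.restrict_apply' measurableSet_closedBall,
          inter_comm]
    _ ≤ ediam S ^ (s - finrank ℝ V) *
          ((2 * ediam S) ^ finrank ℝ V * ENNReal.ofReal (2 * R) ^ finrank ℝ Vᗮ) := by
        grw [volume_closedBall_inter_add_orthogonal_le V hS R]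
    _ = 2 ^ finrank ℝ V * ENNReal.ofReal (2 * R) ^ finrank ℝ Vᗮ *
          (ediam S ^ (s - finrank ℝ V) * ediam S ^ (finrank ℝ V : ℝ)) := by
        rw [ENNReal.rpow_natCast, mul_pow]
        ring
    _ = 2 ^ finrank ℝ V * ENNReal.ofReal (2 * R) ^ finrank ℝ Vᗮ * ediam S ^ s := by
        rw [← ENNReal.rpow_add_of_nonneg _ _ (sub_nonneg.mpr hs) (Nat.cast_nonneg _),
          sub_add_cancel]

theorem setLIntegral_closedBall_sliceSum_le (V : Submodule ℝ F) {u : ℕ → Set F}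
    (hu : ∀ i, IsCompact (u i)) {s : ℝ} (hs : (finrank ℝ V : ℝ) ≤ s) (R : ℝ) :
    ∫⁻ x in closedBall 0 R, sliceSum (s - finrank ℝ V) u (x, V.starProjection) ≤
      2 ^ finrank ℝ V * ENNReal.ofReal (2 * R) ^ finrank ℝ Vᗮ *
        ∑' i, ⨆ _ : (u i).Nonempty, ediam (u i) ^ s := by
  have hmeas (i) : Measurable fun x : F =>
      (incidenceSet (u i)).indicator (fun _ => ediam (u i) ^ (s - finrank ℝ V))
        (x, V.starProjection) :=
    (measurable_const.indicator (hu i).isClosed_incidenceSet.measurableSet).comp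
      (measurable_id.prodMk measurable_const)
  simp only [sliceSum]
  rw [lintegral_tsum fun i => (hmeas i).aemeasurable, ← ENNReal.tsum_mul_left]
  exact ENNReal.tsum_le_tsum fun i =>
    setLIntegral_closedBall_indicator_incidenceSet_le V (hu i).isBounded.ediam_ne_top hs R

end Eilenberg

section Hausdorff

variable {X : Type*} [MetricSpace X] [MeasurableSpace X] [BorelSpace X]

theorem exists_isCompact_cover_tsum_lt [ProperSpace X] {A : Set X} {s : ℝ} {c : ℝ≥0∞}
    (hA : μH[s] A < c) {r : ℝ≥0∞} (hr₀ : 0 < r) (hr : r ≠ ∞) :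
    ∃ u : ℕ → Set X, A ⊆ ⋃ i, u i ∧ (∀ i, IsCompact (u i)) ∧ (∀ i, ediam (u i) ≤ r) ∧
      ∑' i, ⨆ _ : (u i).Nonempty, ediam (u i) ^ s < c := by
  rw [Measure.hausdorffMeasure_apply] at hA
  obtain ⟨t, htA, htr, hts⟩ : ∃ t : ℕ → Set X, A ⊆ ⋃ i, t i ∧ (∀ i, ediam (t i) ≤ r) ∧
      ∑' i, ⨆ _ : (t i).Nonempty, ediam (t i) ^ s < c := by
    simpa only [iInf_lt_iff, exists_prop] using
      (le_iSup₂ (f := fun r (_ : 0 < r) => _) r hr₀).trans_lt hA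
  refine ⟨fun i => closure (t i), htA.trans (iUnion_mono fun i => subset_closure), fun i => ?_,
    fun i => by rw [ediam_closure]; exact htr i,
    by simpa only [ediam_closure, closure_nonempty_iff]⟩
  exact isCompact_of_isClosed_isBounded isClosed_closure
    (isBounded_iff_ediam_ne_top.mpr (by rw [ediam_closure]; exact ((htr i).trans_lt hr.lt_top).ne))

theorem hausdorffMeasure_inter_le_liminf_tsum_indicator {A : Set X} {r : ℕ → ℝ≥0∞}
    (hr : Tendsto r atTop (𝓝 0)) {u : ℕ → ℕ → Set X} (hAu : ∀ k, A ⊆ ⋃ i, u k i)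
    (hur : ∀ k i, ediam (u k i) ≤ r k) (T : Set X) (d : ℝ) :
    μH[d] (A ∩ T) ≤ liminf (fun k =>
      ∑' i, {i | (u k i ∩ T).Nonempty}.indicator (fun i => ediam (u k i) ^ d) i) atTop := by
  simp only [← tsum_subtype]
  refine Measure.hausdorffMeasure_le_liminf_tsum d (A ∩ T) r hr
    (fun k (i : {i | (u k i ∩ T).Nonempty}) => u k i) (.of_forall fun k i => hur k i)
    (.of_forall fun k y hy => ?_)
  obtain ⟨i, hi⟩ := mem_iUnion.mp (hAu k hy.1)
  exact mem_iUnion.mpr ⟨⟨i, y, hi, hy.2⟩, hi⟩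

end Hausdorff

section Majorant

variable {F : Type*} [NormedAddCommGroup F] [InnerProductSpace ℝ F] [FiniteDimensional ℝ F]
  [MeasurableSpace F] [BorelSpace F]

def sliceMajorant (t : ℝ) (u : ℕ → ℕ → Set F) (p : F × (F →L[ℝ] F)) : ℝ≥0∞ :=
  liminf (fun k => sliceSum t (u k) p) atTop

theorem hausdorffMeasure_inter_le_sliceMajorant {A : Set F} {r : ℕ → ℝ≥0∞}
    (hr : Tendsto r atTop (𝓝 0)) {u : ℕ → ℕ → Set F} (hAu : ∀ k, A ⊆ ⋃ i, u k i)
    (hur : ∀ k i, ediam (u k i) ≤ r k) {P : F →L[ℝ] F} (hP : IsStarProjection P) (x : F)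
    (d : ℝ) :
    μH[d] (A ∩ {y | y - x ∈ (LinearMap.range (P : F →ₗ[ℝ] F))ᗮ}) ≤ sliceMajorant d u (x, P) := by
  refine (hausdorffMeasure_inter_le_liminf_tsum_indicator hr hAu hur _ d).trans_eq ?_
  have hmem (S : Set F) :
      (S ∩ {y | y - x ∈ (LinearMap.range (P : F →ₗ[ℝ] F))ᗮ}).Nonempty ↔ (x, P) ∈ incidenceSet S :=
    exists_congr fun y => and_congr_right' (hP.apply_eq_zero_iff _).symm
  simp_rw [hmem]
  rfl

theorem setLIntegral_closedBall_sliceMajorant_le {m : ℕ} {P : F →L[ℝ] F}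
    (hP : P ∈ starProjectionsOfRank F m) {s : ℝ} (hs : (m : ℝ) ≤ s) {u : ℕ → ℕ → Set F}
    (hu : ∀ k i, IsCompact (u k i)) {c : ℝ≥0∞}
    (hc : ∀ k, ∑' i, ⨆ _ : (u k i).Nonempty, ediam (u k i) ^ s ≤ c) (R : ℝ) :
    ∫⁻ x in closedBall 0 R, sliceMajorant (s - m) u (x, P) ≤
      2 ^ m * ENNReal.ofReal (2 * R) ^ (finrank ℝ F - m) * c := by
  set V := LinearMap.range (P : F →ₗ[ℝ] F)
  obtain ⟨_, hPV⟩ := isStarProjection_iff_eq_starProjection_range.mp hP.1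
  have hV : finrank ℝ V = m := finrank_range_of_mem_starProjectionsOfRank hP
  have hV' : finrank ℝ Vᗮ = finrank ℝ F - m := by
    rw [← V.finrank_add_finrank_orthogonal, hV, Nat.add_sub_cancel_left]
  refine (lintegral_liminf_le fun k =>
    (measurable_sliceSum _ (hu k)).comp (measurable_id.prodMk measurable_const)).trans
    (liminf_le_of_frequently_le' (.of_forall fun k => ?_))
  rw [hPV, ← hV', ← hV]
  exact (setLIntegral_closedBall_sliceSum_le V (hu k) (hV ▸ hs) R).trans (by gcongr; exact hc k)

end Majorant

theorem ae_ae_lt_top_of_lintegral_lintegral_ne_top {α β : Type*} [MeasurableSpace α]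
    [MeasurableSpace β] {μ : Measure α} {ν : Measure β} [SFinite μ] [SFinite ν]
    {f : α × β → ℝ≥0∞} (hf : Measurable f) (h : ∫⁻ b, ∫⁻ a, f (a, b) ∂μ ∂ν ≠ ∞) :
    ∀ᵐ a ∂μ, ∀ᵐ b ∂ν, f (a, b) < ∞ := by
  rw [← lintegral_lintegral_swap (f := fun a b => f (a, b)) hf.aemeasurable] at h
  filter_upwards [ae_lt_top hf.lintegral_prod_right' h] with a ha
  exact ae_lt_top (hf.comp measurable_prodMk_left) ha.ne

theorem stmt11_general (n m : ℕ)
    (s : ℝ) (hs : (m : ℝ) ≤ s)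
    (ν : Measure (E n →L[ℝ] E n)) [IsProbabilityMeasure ν]
    (A : Set (E n)) (hfin : μH[s] A < ∞) :
    ∀ᵐ x ∂(volume : Measure (E n)), ∀ᵐ P ∂ν, P ∈ grass n m →
      μH[s - m] (A ∩ {y : E n | y - x ∈ (LinearMap.range (P : E n →ₗ[ℝ] E n))ᗮ}) < ∞ := by
  set K := starProjectionsOfRank (E n) m
  have hK : MeasurableSet K := (isClosed_starProjectionsOfRank m).measurableSet
  choose u hAu hu hur hsum using fun k : ℕ =>
    exists_isCompact_cover_tsum_lt (ENNReal.lt_add_right hfin.ne one_ne_zero)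
      (r := ((k : ℝ≥0∞) + 1)⁻¹) (by simp) (by simp)
  have hr : Tendsto (fun k : ℕ => ((k : ℝ≥0∞) + 1)⁻¹) atTop (𝓝 0) := by
    simpa [Function.comp_def] using
      ENNReal.tendsto_inv_nat_nhds_zero.comp (tendsto_add_atTop_nat 1)
  have hG : Measurable (sliceMajorant (s - m) u) := .liminf fun k => measurable_sliceSum _ (hu k)
  rw [← Measure.restrict_univ (μ := volume), ← iUnion_closedBall_nat (0 : E n),
    ae_restrict_iUnion_iff]
  intro R
  have hint : ∫⁻ P in K, (∫⁻ x in closedBall 0 R, sliceMajorant (s - m) u (x, P)) ∂ν ≠ ∞ := by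
    refine ne_top_of_le_ne_top ?_ (setLIntegral_mono' hK fun P hP =>
      setLIntegral_closedBall_sliceMajorant_le hP hs hu (fun k => (hsum k).le) R)
    rw [setLIntegral_const]
    exact ENNReal.mul_ne_top (by finiteness) (measure_ne_top ν K)
  filter_upwards [ae_ae_lt_top_of_lintegral_lintegral_ne_top hG hint] with x hx
  filter_upwards [(ae_restrict_iff' hK).mp hx] with P hPK hP
  exact (hausdorffMeasure_inter_le_sliceMajorant hr hAu hur
    (grass_subset_starProjectionsOfRank n m hP).1 x _).trans_lt
    (hPK (grass_subset_starProjectionsOfRank n m hP))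

/-- If `A ⊆ ℝ^{2n}` is Borel with `H^s(A) < ∞`, `s ≥ m`, then for Lebesgue-a.e.
`x ∈ ℝ^{2n}` one has `H^{s−m}(A ∩ (V^⊥ + x)) < ∞` for `μ_{2n,m}`-a.e. plane `V`. -/
theorem stmt11 (n m : ℕ) (hn : 1 ≤ n) (hm : 1 ≤ m) (hmn : m ≤ n)
    (s : ℝ) (hs : (m : ℝ) ≤ s)
    (ν : Measure (E n →L[ℝ] E n)) [IsProbabilityMeasure ν] (hν : IsGrassMeasure n m ν)
    (A : Set (E n)) (hA : MeasurableSet A) (hfin : μH[s] A < ∞) :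
    ∀ᵐ x ∂(volume : Measure (E n)), ∀ᵐ P ∂ν, P ∈ grass n m →
      μH[s - m] (A ∩ {y : E n | y - x ∈ (LinearMap.range (P : E n →ₗ[ℝ] E n))ᗮ}) < ∞ :=
  stmt11_general n m s hs ν A hfin
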